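/- For 1 ≤ p < ∞, c > 0, ε > 0 and base metric d, the directed graph GOSPA distance d^{(c,ε)}(X,Y) = min_{W∈𝒲_{X,Y}} (tr[D_{X,Y}ᵀW] + (ε^p/4)(‖A_X W' − W' A_Y‖ + ‖A_Y W'ᵀ − W'ᵀ A_X‖))^{1/p} is a metric on the space of directed graphs with node attributes (identity, symmetry and triangle inequality hold); the same holds for its LP relaxation obtained by minimizing over 𝒲̄_{X,Y} instead of 𝒲_{X,Y}. -/

import Mathlib

open scoped BigOperators Matrix

namespace GraphGOSPA

/-- A directed (possibly weighted) graph with node attributes in a metric space `𝕏`: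
a finite list of distinct nodes together with a (not necessarily symmetric) real
adjacency matrix; `A i j ≠ 0` exactly when there is a directed edge from node `i`
to node `j` of weight `A i j`. -/
structure DiGraph (𝕏 : Type*) [MetricSpace 𝕏] where
  n : ℕ
  nodes : Fin n → 𝕏
  nodes_inj : Function.Injective nodes
  A : Matrix (Fin n) (Fin n) ℝ

variable {𝕏 : Type*} [MetricSpace 𝕏]

/-- Componentwise 1-norm of a matrix. -/
def onorm {m n : ℕ} (M : Matrix (Fin m) (Fin n) ℝ) : ℝ :=
  ∑ i, ∑ j, |M i j|

/-- The top-left `m × n` block of an `(m+1) × (n+1)` matrix. -/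
def topLeft {m n : ℕ} (W : Matrix (Fin (m+1)) (Fin (n+1)) ℝ) :
    Matrix (Fin m) (Fin n) ℝ :=
  fun i j => W i.castSucc j.castSucc

/-- The set `𝒲_{X,Y}` of binary assignment matrices: entries in `{0,1}`,
each of the first `nY` columns sums to 1, each of the first `nX` rows sums to 1,
and the bottom-right corner is 0. -/
def Wset (nX nY : ℕ) : Set (Matrix (Fin (nX+1)) (Fin (nY+1)) ℝ) :=
  {W | (∀ i j, W i j = 0 ∨ W i j = 1) ∧
    (∀ j : Fin nY, ∑ i, W i j.castSucc = 1) ∧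
    (∀ i : Fin nX, ∑ j, W i.castSucc j = 1) ∧
    W (Fin.last nX) (Fin.last nY) = 0}

/-- The relaxed set `𝒲̄_{X,Y}`: nonnegative entries, with the same row/column sum
constraints and zero bottom-right corner. -/
def WbarSet (nX nY : ℕ) : Set (Matrix (Fin (nX+1)) (Fin (nY+1)) ℝ) :=
  {W | (∀ i j, 0 ≤ W i j) ∧
    (∀ j : Fin nY, ∑ i, W i j.castSucc = 1) ∧
    (∀ i : Fin nX, ∑ j, W i.castSucc j = 1) ∧
    W (Fin.last nX) (Fin.last nY) = 0}

/-- The cost matrix `D_{X,Y}`. -/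
noncomputable def Dmat (p c : ℝ) (X Y : DiGraph 𝕏) :
    Matrix (Fin (X.n+1)) (Fin (Y.n+1)) ℝ :=
  fun i j =>
    if hi : (i : ℕ) < X.n then
      if hj : (j : ℕ) < Y.n then dist (X.nodes ⟨i, hi⟩) (Y.nodes ⟨j, hj⟩) ^ p
      else c ^ p / 2
    else if (j : ℕ) < Y.n then c ^ p / 2 else 0

/-- The directed graph GOSPA objective
`tr[D_{X,Y}ᵀ W] + (ε^p/4)(‖A_X W' − W' A_Y‖ + ‖A_Y W'ᵀ − W'ᵀ A_X‖)`. -/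
noncomputable def objD (p c ε : ℝ) (X Y : DiGraph 𝕏)
    (W : Matrix (Fin (X.n+1)) (Fin (Y.n+1)) ℝ) : ℝ :=
  Matrix.trace ((Dmat p c X Y)ᵀ * W) +
    ε ^ p / 4 * (onorm (X.A * topLeft W - topLeft W * Y.A) +
      onorm (Y.A * (topLeft W)ᵀ - (topLeft W)ᵀ * X.A))

/-- The directed graph GOSPA distance (minimum over binary assignment matrices). -/
noncomputable def gospaD (p c ε : ℝ) (X Y : DiGraph 𝕏) : ℝ :=
  sInf {v | ∃ W ∈ Wset X.n Y.n, v = objD p c ε X Y W} ^ (1 / p)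

/-- The LP relaxation of the directed graph GOSPA distance (minimum over relaxed
assignment matrices). -/
noncomputable def gospaDLP (p c ε : ℝ) (X Y : DiGraph 𝕏) : ℝ :=
  sInf {v | ∃ W ∈ WbarSet X.n Y.n, v = objD p c ε X Y W} ^ (1 / p)

/-- The node set of a directed graph. -/
def nodeSet (X : DiGraph 𝕏) : Set 𝕏 := Set.range X.nodes

/-- The weighted directed edge set of a directed graph: ordered pairs of node
attributes together with the (nonzero) weight of the corresponding directed edge. -/
def dEdgeSet (X : DiGraph 𝕏) : Set (𝕏 × 𝕏 × ℝ) :=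
  {e | ∃ i j, X.A i j ≠ 0 ∧ e = (X.nodes i, X.nodes j, X.A i j)}

/-- Two directed graphs are equal when they have the same node set and the same
weighted directed edge set. -/
def DiGraphEq (X Y : DiGraph 𝕏) : Prop :=
  nodeSet X = nodeSet Y ∧ dEdgeSet X = dEdgeSet Y


/-!
Both distances have the form `(min_{W ∈ S} objD W)^(1/p)` for a compact family `S` of
assignment matrices (so the minimum is attained) that is closed under transposition and under a
composition `compW`. Transposing an assignment gives symmetry.

For the triangle inequality, optimal assignments `X → Z` and `Z → Y` are glued into a
distribution of mass over routes `i → k → j`. Put the dummy node at distance `(c^p/2)^(1/p)` from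
every real node. Charging each route the sum of its two legs then bounds the cost of the composite
`X → Y`, and Minkowski's inequality splits this bound into the costs of the two given assignments.
The edge mismatch is subadditive because the node block of the composite is the product of two
doubly substochastic blocks.

A zero objective puts all mass on pairs of equal nodes, so the node block is a permutation matrix
that intertwines the adjacency matrices, that is, an isomorphism. Conversely, an isomorphism
gives an assignment with zero cost.
-/

section OneNorm

variable {m n q : ℕ}

lemma onorm_nonneg (M : Matrix (Fin m) (Fin n) ℝ) : 0 ≤ onorm M := by
  unfold onorm; positivity

lemma onorm_eq_zero {M : Matrix (Fin m) (Fin n) ℝ} : onorm M = 0 ↔ M = 0 := by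
  simp [onorm, Finset.sum_eq_zero_iff_of_nonneg, Finset.sum_nonneg, ← Matrix.ext_iff]

lemma onorm_add_le (M N : Matrix (Fin m) (Fin n) ℝ) : onorm (M + N) ≤ onorm M + onorm N := by
  simp only [onorm, ← Finset.sum_add_distrib]
  gcongr with i _ j _
  exact abs_add_le _ _

lemma onorm_transpose (M : Matrix (Fin m) (Fin n) ℝ) : onorm Mᵀ = onorm M :=
  Finset.sum_comm

lemma onorm_mul_le {M : Matrix (Fin m) (Fin n) ℝ} {V : Matrix (Fin n) (Fin q) ℝ}
    (hV : ∀ k j, 0 ≤ V k j) (hrow : ∀ k, ∑ j, V k j ≤ 1) : onorm (M * V) ≤ onorm M := by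
  calc onorm (M * V) ≤ ∑ i, ∑ j, ∑ k, |M i k| * V k j := by
        unfold onorm
        gcongr with i _ j _
        rw [Matrix.mul_apply]
        refine (Finset.abs_sum_le_sum_abs _ _).trans_eq ?_
        simp [abs_mul, abs_of_nonneg (hV _ _)]
    _ = ∑ i, ∑ k, |M i k| * ∑ j, V k j := by
        simp only [Finset.mul_sum]
        exact Finset.sum_congr rfl fun i _ => Finset.sum_comm
    _ ≤ onorm M := by
        unfold onorm
        gcongr with i _ k _
        exact mul_le_of_le_one_right (abs_nonneg _) (hrow k)

lemma mul_onorm_le {V : Matrix (Fin m) (Fin n) ℝ} {M : Matrix (Fin n) (Fin q) ℝ}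
    (hV : ∀ i k, 0 ≤ V i k) (hcol : ∀ k, ∑ i, V i k ≤ 1) : onorm (V * M) ≤ onorm M := by
  rw [← onorm_transpose, Matrix.transpose_mul, ← onorm_transpose M]
  exact onorm_mul_le (fun k i => hV i k) hcol

def IsDoublySubstochastic (V : Matrix (Fin m) (Fin n) ℝ) : Prop :=
  (∀ i j, 0 ≤ V i j) ∧ (∀ i, ∑ j, V i j ≤ 1) ∧ ∀ j, ∑ i, V i j ≤ 1

lemma IsDoublySubstochastic.transpose {V : Matrix (Fin m) (Fin n) ℝ}
    (hV : IsDoublySubstochastic V) : IsDoublySubstochastic Vᵀ :=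
  ⟨fun i j => hV.1 j i, hV.2.2, hV.2.1⟩

lemma onorm_commutator_mul_le {a b g : ℕ} (A : Matrix (Fin a) (Fin a) ℝ)
    (B : Matrix (Fin b) (Fin b) ℝ) (C : Matrix (Fin g) (Fin g) ℝ)
    {P : Matrix (Fin a) (Fin b) ℝ} {Q : Matrix (Fin b) (Fin g) ℝ}
    (hP : IsDoublySubstochastic P) (hQ : IsDoublySubstochastic Q) :
    onorm (A * (P * Q) - P * Q * C) ≤ onorm (A * P - P * B) + onorm (B * Q - Q * C) := by
  have h : A * (P * Q) - P * Q * C = (A * P - P * B) * Q + P * (B * Q - Q * C) := by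
    simp only [Matrix.sub_mul, Matrix.mul_sub, Matrix.mul_assoc]; abel
  rw [h]
  exact (onorm_add_le _ _).trans
    (add_le_add (onorm_mul_le hQ.1 hQ.2.1) (mul_onorm_le hP.1 hP.2.2))

def mismatch (A : Matrix (Fin m) (Fin m) ℝ) (B : Matrix (Fin n) (Fin n) ℝ)
    (V : Matrix (Fin m) (Fin n) ℝ) : ℝ :=
  onorm (A * V - V * B) + onorm (B * Vᵀ - Vᵀ * A)

lemma mismatch_nonneg (A : Matrix (Fin m) (Fin m) ℝ) (B : Matrix (Fin n) (Fin n) ℝ)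
    (V : Matrix (Fin m) (Fin n) ℝ) : 0 ≤ mismatch A B V :=
  add_nonneg (onorm_nonneg _) (onorm_nonneg _)

lemma mismatch_transpose (A : Matrix (Fin m) (Fin m) ℝ) (B : Matrix (Fin n) (Fin n) ℝ)
    (V : Matrix (Fin m) (Fin n) ℝ) : mismatch B A Vᵀ = mismatch A B V := by
  rw [mismatch, mismatch, Matrix.transpose_transpose, add_comm]

lemma mismatch_mul_le {a b g : ℕ} (A : Matrix (Fin a) (Fin a) ℝ)
    (B : Matrix (Fin b) (Fin b) ℝ) (C : Matrix (Fin g) (Fin g) ℝ)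
    {P : Matrix (Fin a) (Fin b) ℝ} {Q : Matrix (Fin b) (Fin g) ℝ}
    (hP : IsDoublySubstochastic P) (hQ : IsDoublySubstochastic Q) :
    mismatch A C (P * Q) ≤ mismatch A B P + mismatch B C Q := by
  have h₁ := onorm_commutator_mul_le A B C hP hQ
  have h₂ := onorm_commutator_mul_le C B A hQ.transpose hP.transpose
  rw [← Matrix.transpose_mul] at h₂
  unfold mismatch
  linarith

end OneNorm

section Cost

variable {p c ε : ℝ}

lemma trace_transpose_mul_eq_sum {m n : ℕ} (D W : Matrix (Fin m) (Fin n) ℝ) :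
    Matrix.trace (Dᵀ * W) = ∑ i, ∑ j, D i j * W i j := by
  simp only [Matrix.trace, Matrix.diag_apply, Matrix.mul_apply, Matrix.transpose_apply]
  exact Finset.sum_comm

@[simp] lemma Dmat_castSucc_castSucc (X Y : DiGraph 𝕏) (i : Fin X.n) (j : Fin Y.n) :
    Dmat p c X Y i.castSucc j.castSucc = dist (X.nodes i) (Y.nodes j) ^ p := by
  simp [Dmat]

@[simp] lemma Dmat_castSucc_last (X Y : DiGraph 𝕏) (i : Fin X.n) :
    Dmat p c X Y i.castSucc (Fin.last Y.n) = c ^ p / 2 := by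
  simp [Dmat]

@[simp] lemma Dmat_last_castSucc (X Y : DiGraph 𝕏) (j : Fin Y.n) :
    Dmat p c X Y (Fin.last X.n) j.castSucc = c ^ p / 2 := by
  simp [Dmat]

@[simp] lemma Dmat_last_last (X Y : DiGraph 𝕏) :
    Dmat p c X Y (Fin.last X.n) (Fin.last Y.n) = 0 := by
  simp [Dmat]

lemma Dmat_nonneg (hc : 0 ≤ c) (X Y : DiGraph 𝕏) (i j) : 0 ≤ Dmat p c X Y i j := by
  induction i using Fin.lastCases <;> induction j using Fin.lastCases <;>
    simp only [Dmat_castSucc_castSucc, Dmat_castSucc_last, Dmat_last_castSucc, Dmat_last_last] <;>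
    positivity

lemma Dmat_swap (X Y : DiGraph 𝕏) (i j) : Dmat p c Y X j i = Dmat p c X Y i j := by
  induction i using Fin.lastCases <;> induction j using Fin.lastCases <;> simp [dist_comm]

lemma objD_eq (X Y : DiGraph 𝕏) (W : Matrix (Fin (X.n+1)) (Fin (Y.n+1)) ℝ) :
    objD p c ε X Y W =
      ∑ i, ∑ j, W i j * Dmat p c X Y i j + ε ^ p / 4 * mismatch X.A Y.A (topLeft W) := by
  simp only [objD, trace_transpose_mul_eq_sum, mismatch, mul_comm (Dmat p c X Y _ _)]

lemma objD_nonneg (hc : 0 ≤ c) (hε : 0 ≤ ε) {X Y : DiGraph 𝕏}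
    {W : Matrix (Fin (X.n+1)) (Fin (Y.n+1)) ℝ} (hW : W ∈ WbarSet X.n Y.n) :
    0 ≤ objD p c ε X Y W := by
  rw [objD_eq]
  exact add_nonneg (Finset.sum_nonneg fun i _ => Finset.sum_nonneg fun j _ =>
    mul_nonneg (hW.1 i j) (Dmat_nonneg hc X Y i j))
    (mul_nonneg (by positivity) (mismatch_nonneg ..))

lemma objD_transpose (X Y : DiGraph 𝕏) (W : Matrix (Fin (X.n+1)) (Fin (Y.n+1)) ℝ) :
    objD p c ε Y X Wᵀ = objD p c ε X Y W := by
  rw [objD_eq, objD_eq, Finset.sum_comm]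
  simp only [Dmat_swap, Matrix.transpose_apply]
  rw [show topLeft Wᵀ = (topLeft W)ᵀ from rfl, mismatch_transpose]

lemma continuous_objD (X Y : DiGraph 𝕏) : Continuous (objD p c ε X Y) := by
  have honorm {m n : ℕ} : Continuous (onorm : Matrix (Fin m) (Fin n) ℝ → ℝ) := by
    unfold onorm; fun_prop
  have htopLeft : Continuous (topLeft : Matrix (Fin (X.n+1)) (Fin (Y.n+1)) ℝ → _) := by
    unfold topLeft; fun_prop
  unfold objD
  fun_prop

end Cost

section AssignmentSets

variable {m n : ℕ} {W : Matrix (Fin (m+1)) (Fin (n+1)) ℝ}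

lemma Wset_subset_WbarSet : Wset m n ⊆ WbarSet m n := by
  rintro W ⟨h01, hcol, hrow, hcorner⟩
  refine ⟨fun i j => ?_, hcol, hrow, hcorner⟩
  rcases h01 i j with h | h <;> simp [h]

lemma transpose_mem_WbarSet (hW : W ∈ WbarSet m n) : Wᵀ ∈ WbarSet n m :=
  ⟨fun i j => hW.1 j i, hW.2.2.1, hW.2.1, hW.2.2.2⟩

lemma transpose_mem_Wset (hW : W ∈ Wset m n) : Wᵀ ∈ Wset n m :=
  ⟨fun i j => hW.1 j i, hW.2.2.1, hW.2.1, hW.2.2.2⟩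

lemma le_one_of_mem_WbarSet (hW : W ∈ WbarSet m n) (i : Fin (m+1)) (j : Fin (n+1)) :
    W i j ≤ 1 := by
  obtain ⟨h0, hcol, hrow, hcorner⟩ := hW
  induction i using Fin.lastCases with
  | cast i => exact hrow i ▸ Finset.single_le_sum (fun k _ => h0 _ k) (Finset.mem_univ j)
  | last =>
    induction j using Fin.lastCases with
    | cast j => exact hcol j ▸ Finset.single_le_sum (fun k _ => h0 k _) (Finset.mem_univ _)
    | last => simp [hcorner]

lemma isDoublySubstochastic_topLeft (hW : W ∈ WbarSet m n) :
    IsDoublySubstochastic (topLeft W) := by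
  obtain ⟨h0, hcol, hrow, -⟩ := hW
  refine ⟨fun i j => h0 _ _, fun i => ?_, fun j => ?_⟩
  · have := hrow i
    rw [Fin.sum_univ_castSucc] at this
    simp only [topLeft]
    linarith [h0 i.castSucc (Fin.last n)]
  · have := hcol j
    rw [Fin.sum_univ_castSucc] at this
    simp only [topLeft]
    linarith [h0 (Fin.last m) j.castSucc]

lemma isCompact_WbarSet : IsCompact (WbarSet m n) := by
  have hclosed : IsClosed (WbarSet m n) := by
    simp only [WbarSet, Set.ofPred_and, Set.ofPred_forall]
    refine .inter (isClosed_iInter fun i => isClosed_iInter fun j => ?_) <| .inter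
      (isClosed_iInter fun j => ?_) <| .inter (isClosed_iInter fun i => ?_) ?_
    · exact isClosed_le continuous_const (by fun_prop)
    all_goals exact isClosed_eq (by fun_prop) continuous_const
  exact (isCompact_univ_pi fun _ => isCompact_univ_pi fun _ => isCompact_Icc).of_isClosed_subset
    hclosed fun W hW i _ j _ => ⟨hW.1 i j, le_one_of_mem_WbarSet hW i j⟩

lemma isCompact_Wset : IsCompact (Wset m n) := by
  refine Set.Finite.isCompact <| (Set.Finite.pi fun _ => Set.Finite.pi fun _ =>
    Set.toFinite ({0, 1} : Set ℝ)).subset fun W hW i _ j _ => ?_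
  simpa using hW.1 i j

lemma mem_Wset_of_mem_WbarSet (hW : W ∈ WbarSet m n)
    (hnat : ∀ i j, W i j ∈ (Nat.castRingHom ℝ).rangeS) : W ∈ Wset m n := by
  refine ⟨fun i j => ?_, hW.2⟩
  obtain ⟨k, hk⟩ := hnat i j
  have : (k : ℝ) ≤ 1 := by simpa [← hk] using le_one_of_mem_WbarSet hW i j
  have : k ≤ 1 := by exact_mod_cast this
  interval_cases k <;> simp [← hk]

def allDummy (m n : ℕ) : Matrix (Fin (m+1)) (Fin (n+1)) ℝ :=
  fun i j => if (i = Fin.last m ↔ j = Fin.last n) then 0 else 1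

lemma allDummy_mem_Wset : allDummy m n ∈ Wset m n := by
  refine ⟨fun i j => ?_, fun j => ?_, fun i => ?_, by simp [allDummy]⟩
  · unfold allDummy; split_ifs <;> simp
  all_goals simp [allDummy, Fin.castSucc_ne_last]

noncomputable def permW (e : Fin m ≃ Fin n) : Matrix (Fin (m+1)) (Fin (n+1)) ℝ :=
  fun i j => Fin.lastCases 0 (fun i' => Fin.lastCases 0 (fun j' => e.toPEquiv.toMatrix i' j') j) i

@[simp] lemma permW_castSucc_castSucc (e : Fin m ≃ Fin n) (i : Fin m) (j : Fin n) :
    permW e i.castSucc j.castSucc = if e i = j then 1 else 0 := by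
  simp [permW, PEquiv.toMatrix_apply]

@[simp] lemma permW_castSucc_last (e : Fin m ≃ Fin n) (i : Fin m) :
    permW e i.castSucc (Fin.last n) = 0 := by
  simp [permW]

@[simp] lemma permW_last (e : Fin m ≃ Fin n) (j : Fin (n+1)) : permW e (Fin.last m) j = 0 := by
  simp [permW]

lemma topLeft_permW (e : Fin m ≃ Fin n) : topLeft (permW e) = e.toPEquiv.toMatrix := by
  ext i j
  simp [topLeft, PEquiv.toMatrix_apply]

lemma permW_mem_Wset (e : Fin m ≃ Fin n) : permW e ∈ Wset m n := by
  refine ⟨fun i j => ?_, fun j => ?_, fun i => ?_, by simp⟩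
  · induction i using Fin.lastCases <;> induction j using Fin.lastCases <;> simp [em']
  · simp [Fin.sum_univ_castSucc, ← Equiv.eq_symm_apply]
  · simp [Fin.sum_univ_castSucc]

end AssignmentSets

section Gluing

variable {a b g : ℕ} {W1 : Matrix (Fin (a+1)) (Fin (b+1)) ℝ}
  {W2 : Matrix (Fin (b+1)) (Fin (g+1)) ℝ}

/-- The mass routed `i → k → j` when `W1` is followed by `W2`. Mass that `W1` sends to the dummy
`k = last`, or that `W2` takes from it, skips the middle graph: it is matched with the dummy of
the far side. -/
noncomputable def glue (W1 : Matrix (Fin (a+1)) (Fin (b+1)) ℝ)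
    (W2 : Matrix (Fin (b+1)) (Fin (g+1)) ℝ) (i : Fin (a+1)) (k : Fin (b+1)) (j : Fin (g+1)) :
    ℝ :=
  if k = Fin.last b then
    (if j = Fin.last g then W1 i k else 0) + (if i = Fin.last a then W2 k j else 0)
  else W1 i k * W2 k j

noncomputable def compW (W1 : Matrix (Fin (a+1)) (Fin (b+1)) ℝ)
    (W2 : Matrix (Fin (b+1)) (Fin (g+1)) ℝ) : Matrix (Fin (a+1)) (Fin (g+1)) ℝ :=
  fun i j => if i = Fin.last a ∧ j = Fin.last g then 0 else ∑ k, glue W1 W2 i k j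

lemma glue_nonneg (hW1 : W1 ∈ WbarSet a b) (hW2 : W2 ∈ WbarSet b g) (i k j) :
    0 ≤ glue W1 W2 i k j := by
  have := hW1.1 i k; have := hW2.1 k j
  unfold glue; split_ifs <;> positivity

lemma glue_last_of_ne {i : Fin (a+1)} {j : Fin (g+1)} (hi : i ≠ Fin.last a)
    (hj : j ≠ Fin.last g) : glue W1 W2 i (Fin.last b) j = 0 := by
  simp [glue, hi, hj]

lemma sum_glue_right (hW2 : W2 ∈ WbarSet b g) {i : Fin (a+1)} {k : Fin (b+1)}
    (hik : ¬(i = Fin.last a ∧ k = Fin.last b)) : ∑ j, glue W1 W2 i k j = W1 i k := by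
  induction k using Fin.lastCases with
  | cast k => simp [glue, Fin.castSucc_ne_last, ← Finset.mul_sum, hW2.2.2.1 k]
  | last => simp_all [glue]

lemma sum_glue_left (hW1 : W1 ∈ WbarSet a b) {k : Fin (b+1)} {j : Fin (g+1)}
    (hkj : ¬(k = Fin.last b ∧ j = Fin.last g)) : ∑ i, glue W1 W2 i k j = W2 k j := by
  induction k using Fin.lastCases with
  | cast k => simp [glue, Fin.castSucc_ne_last, ← Finset.sum_mul, hW1.2.1 k]
  | last => simp_all [glue]

lemma compW_apply_of_ne {i : Fin (a+1)} {j : Fin (g+1)}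
    (hij : ¬(i = Fin.last a ∧ j = Fin.last g)) : compW W1 W2 i j = ∑ k, glue W1 W2 i k j :=
  if_neg hij

lemma topLeft_compW : topLeft (compW W1 W2) = topLeft W1 * topLeft W2 := by
  ext i j
  simp [topLeft, compW, Fin.castSucc_ne_last, Fin.sum_univ_castSucc, glue, Matrix.mul_apply]

lemma compW_mem_WbarSet (hW1 : W1 ∈ WbarSet a b) (hW2 : W2 ∈ WbarSet b g) :
    compW W1 W2 ∈ WbarSet a g := by
  refine ⟨fun i j => ?_, fun j => ?_, fun i => ?_, if_pos ⟨rfl, rfl⟩⟩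
  · unfold compW
    split_ifs
    exacts [le_rfl, Finset.sum_nonneg fun k _ => glue_nonneg hW1 hW2 i k j]
  · simp_rw [compW_apply_of_ne (fun h => Fin.castSucc_ne_last _ h.2)]
    rw [Finset.sum_comm]
    simp_rw [sum_glue_left hW1 (fun h => Fin.castSucc_ne_last _ h.2)]
    exact hW2.2.1 j
  · simp_rw [compW_apply_of_ne (fun h => Fin.castSucc_ne_last _ h.1)]
    rw [Finset.sum_comm]
    simp_rw [sum_glue_right hW2 (fun h => Fin.castSucc_ne_last _ h.1)]
    exact hW1.2.2.1 i

lemma compW_mem_Wset (hW1 : W1 ∈ Wset a b) (hW2 : W2 ∈ Wset b g) :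
    compW W1 W2 ∈ Wset a g := by
  have hnat {m n : ℕ} {W : Matrix (Fin (m+1)) (Fin (n+1)) ℝ} (hW : W ∈ Wset m n) (i j) :
      W i j ∈ (Nat.castRingHom ℝ).rangeS := by
    rcases hW.1 i j with h | h <;> simp [h]
  refine mem_Wset_of_mem_WbarSet (compW_mem_WbarSet (Wset_subset_WbarSet hW1)
    (Wset_subset_WbarSet hW2)) fun i j => ?_
  unfold compW
  split_ifs
  · exact zero_mem _
  refine sum_mem fun k _ => ?_
  have h1 := hnat hW1 i k
  have h2 := hnat hW2 k j
  unfold glue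
  split_ifs <;> apply_rules [add_mem, mul_mem, zero_mem]

end Gluing

section Triangle

variable {p c ε : ℝ}

lemma rpow_sum_add_le {ι : Type*} [Fintype ι] (hp : 1 ≤ p) {w x y : ι → ℝ}
    (hw : ∀ l, 0 ≤ w l) (hx : ∀ l, 0 ≤ x l) (hy : ∀ l, 0 ≤ y l) {E F : ℝ}
    (hE : 0 ≤ E) (hF : 0 ≤ F) :
    (∑ l, w l * (x l + y l) ^ p + (E + F)) ^ (1 / p) ≤
      (∑ l, w l * x l ^ p + E) ^ (1 / p) + (∑ l, w l * y l ^ p + F) ^ (1 / p) := by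
  have hp0 : p ≠ 0 := by positivity
  have hroot {r : ℝ} (hr : 0 ≤ r) : (r ^ (1 / p)) ^ p = r := by
    rw [← Real.rpow_mul hr, one_div_mul_cancel hp0, Real.rpow_one]
  have hweight {r s : ℝ} (hr : 0 ≤ r) (hs : 0 ≤ s) : (r ^ (1 / p) * s) ^ p = r * s ^ p := by
    rw [Real.mul_rpow (by positivity) hs, hroot hr]
  have := Real.Lp_add_le_of_nonneg Finset.univ hp
    (f := Sum.elim (fun l => w l ^ (1 / p) * x l) ![E ^ (1 / p), 0])
    (g := Sum.elim (fun l => w l ^ (1 / p) * y l) ![0, F ^ (1 / p)])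
    (by rintro (l | l) -
        · exact mul_nonneg (Real.rpow_nonneg (hw l) _) (hx l)
        · fin_cases l <;> simp [Real.rpow_nonneg, *])
    (by rintro (l | l) -
        · exact mul_nonneg (Real.rpow_nonneg (hw l) _) (hy l)
        · fin_cases l <;> simp [Real.rpow_nonneg, *])
  simpa only [Fintype.sum_sum_type, Fin.sum_univ_two, Sum.elim_inl, Sum.elim_inr,
    Matrix.cons_val_zero, Matrix.cons_val_one, ← mul_add, add_zero, zero_add,
    hweight (hw _) (hx _), hweight (hw _) (hy _), hweight (hw _) (add_nonneg (hx _) (hy _)),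
    hroot hE, hroot hF, Real.zero_rpow hp0] using this

/-- Between real nodes this is `dist`; a dummy is at distance `(c^p/2)^(1/p)` from every real
node and at distance `0` from the other dummy. -/
noncomputable def augDist (p c : ℝ) (X Y : DiGraph 𝕏) (i : Fin (X.n+1)) (j : Fin (Y.n+1)) : ℝ :=
  Dmat p c X Y i j ^ (1 / p)

lemma augDist_nonneg (hc : 0 ≤ c) (X Y : DiGraph 𝕏) (i j) : 0 ≤ augDist p c X Y i j :=
  Real.rpow_nonneg (Dmat_nonneg hc X Y i j) _

lemma augDist_rpow (hp : p ≠ 0) (hc : 0 ≤ c) (X Y : DiGraph 𝕏) (i j) :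
    augDist p c X Y i j ^ p = Dmat p c X Y i j := by
  rw [augDist, ← Real.rpow_mul (Dmat_nonneg hc X Y i j), one_div_mul_cancel hp, Real.rpow_one]

/-- The triangle inequality fails only for a detour through the dummy between two real nodes,
a route that `glue` never uses. -/
lemma augDist_le_add (hp : p ≠ 0) (hc : 0 ≤ c) (X Z Y : DiGraph 𝕏) {i : Fin (X.n+1)}
    {k : Fin (Z.n+1)} {j : Fin (Y.n+1)}
    (h : ¬(k = Fin.last Z.n ∧ i ≠ Fin.last X.n ∧ j ≠ Fin.last Y.n)) :
    augDist p c X Y i j ≤ augDist p c X Z i k + augDist p c Z Y k j := by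
  have hdist (x y : 𝕏) : (dist x y ^ p) ^ (1 / p) = dist x y := by
    rw [← Real.rpow_mul dist_nonneg, mul_one_div_cancel hp, Real.rpow_one]
  have hdummy : 0 ≤ (c ^ p / 2) ^ (1 / p) := by positivity
  induction i using Fin.lastCases <;> induction k using Fin.lastCases <;>
    induction j using Fin.lastCases <;>
    simp_all [augDist, Real.zero_rpow, Fin.castSucc_ne_last, dist_triangle]

lemma sum_mul_congr_of_ne_last_last {m n : ℕ} {f u v : Matrix (Fin (m+1)) (Fin (n+1)) ℝ}
    (hf : f (Fin.last m) (Fin.last n) = 0)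
    (huv : ∀ i j, ¬(i = Fin.last m ∧ j = Fin.last n) → u i j = v i j) :
    ∑ i, ∑ j, u i j * f i j = ∑ i, ∑ j, v i j * f i j := by
  refine Finset.sum_congr rfl fun i _ => Finset.sum_congr rfl fun j _ => ?_
  by_cases h : i = Fin.last m ∧ j = Fin.last n
  · simp [h.1, h.2, hf]
  · rw [huv i j h]

lemma sum_compW_mul_Dmat_le (hp : 0 < p) (hc : 0 ≤ c) {X Z Y : DiGraph 𝕏}
    {W1 : Matrix (Fin (X.n+1)) (Fin (Z.n+1)) ℝ} {W2 : Matrix (Fin (Z.n+1)) (Fin (Y.n+1)) ℝ}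
    (hW1 : W1 ∈ WbarSet X.n Z.n) (hW2 : W2 ∈ WbarSet Z.n Y.n) :
    ∑ i, ∑ j, compW W1 W2 i j * Dmat p c X Y i j ≤
      ∑ i, ∑ k, ∑ j, glue W1 W2 i k j * (augDist p c X Z i k + augDist p c Z Y k j) ^ p := by
  calc ∑ i, ∑ j, compW W1 W2 i j * Dmat p c X Y i j
      = ∑ i, ∑ k, ∑ j, glue W1 W2 i k j * augDist p c X Y i j ^ p := by
        simp only [augDist_rpow hp.ne' hc]
        conv_rhs => enter [2, i]; rw [Finset.sum_comm]
        simp only [← Finset.sum_mul]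
        exact sum_mul_congr_of_ne_last_last (Dmat_last_last X Y) fun i j hij =>
          compW_apply_of_ne hij
    _ ≤ _ := by
        refine Finset.sum_le_sum fun i _ => Finset.sum_le_sum fun k _ =>
          Finset.sum_le_sum fun j _ => ?_
        by_cases h : k = Fin.last Z.n ∧ i ≠ Fin.last X.n ∧ j ≠ Fin.last Y.n
        · obtain ⟨rfl, hi, hj⟩ := h
          simp [glue_last_of_ne hi hj]
        · have := glue_nonneg hW1 hW2 i k j
          have := augDist_nonneg (p := p) hc X Y i j
          gcongr
          exact augDist_le_add hp.ne' hc X Z Y h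

lemma objD_compW_rpow_le (hp : 1 ≤ p) (hc : 0 ≤ c) (hε : 0 ≤ ε) {X Z Y : DiGraph 𝕏}
    {W1 : Matrix (Fin (X.n+1)) (Fin (Z.n+1)) ℝ} {W2 : Matrix (Fin (Z.n+1)) (Fin (Y.n+1)) ℝ}
    (hW1 : W1 ∈ WbarSet X.n Z.n) (hW2 : W2 ∈ WbarSet Z.n Y.n) :
    objD p c ε X Y (compW W1 W2) ^ (1 / p) ≤
      objD p c ε X Z W1 ^ (1 / p) + objD p c ε Z Y W2 ^ (1 / p) := by
  set w : Fin (X.n+1) × Fin (Z.n+1) × Fin (Y.n+1) → ℝ := fun t => glue W1 W2 t.1 t.2.1 t.2.2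
  set x := fun t : Fin (X.n+1) × Fin (Z.n+1) × Fin (Y.n+1) => augDist p c X Z t.1 t.2.1
  set y := fun t : Fin (X.n+1) × Fin (Z.n+1) × Fin (Y.n+1) => augDist p c Z Y t.2.1 t.2.2
  set E1 := ε ^ p / 4 * mismatch X.A Z.A (topLeft W1)
  set E2 := ε ^ p / 4 * mismatch Z.A Y.A (topLeft W2)
  have hXZ : objD p c ε X Z W1 = ∑ t, w t * x t ^ p + E1 := by
    simp only [objD_eq, Fintype.sum_prod_type, w, x, augDist_rpow (by positivity) hc,
      ← Finset.sum_mul]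
    rw [sum_mul_congr_of_ne_last_last (Dmat_last_last X Z) fun i k hik =>
      (sum_glue_right hW2 hik).symm]
  have hZY : objD p c ε Z Y W2 = ∑ t, w t * y t ^ p + E2 := by
    simp only [objD_eq, Fintype.sum_prod_type, w, y, augDist_rpow (by positivity) hc]
    conv_rhs => rw [Finset.sum_comm]; enter [1, 2, k]; rw [Finset.sum_comm]
    simp only [← Finset.sum_mul]
    rw [sum_mul_congr_of_ne_last_last (Dmat_last_last Z Y) fun k j hkj =>
      (sum_glue_left hW1 hkj).symm]
  have hXY : objD p c ε X Y (compW W1 W2) ≤ ∑ t, w t * (x t + y t) ^ p + (E1 + E2) := by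
    rw [objD_eq, topLeft_compW]
    gcongr ?_ + ?_
    · simpa only [Fintype.sum_prod_type] using sum_compW_mul_Dmat_le (by positivity) hc hW1 hW2
    · rw [← mul_add]
      exact mul_le_mul_of_nonneg_left (mismatch_mul_le _ _ _ (isDoublySubstochastic_topLeft hW1)
        (isDoublySubstochastic_topLeft hW2)) (by positivity)
  rw [hXZ, hZY]
  exact (Real.rpow_le_rpow (objD_nonneg hc hε (compW_mem_WbarSet hW1 hW2)) hXY
    (by positivity)).trans <| rpow_sum_add_le hp (fun _ => glue_nonneg hW1 hW2 _ _ _)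
      (fun _ => augDist_nonneg hc _ _ _ _) (fun _ => augDist_nonneg hc _ _ _ _)
      (mul_nonneg (by positivity) (mismatch_nonneg ..))
      (mul_nonneg (by positivity) (mismatch_nonneg ..))

end Triangle

section Identity

variable {p c ε : ℝ}

lemma mul_toMatrix_eq_toMatrix_mul_iff {m n : ℕ} (A : Matrix (Fin m) (Fin m) ℝ)
    (B : Matrix (Fin n) (Fin n) ℝ) (e : Fin m ≃ Fin n) :
    A * (e.toPEquiv.toMatrix : Matrix (Fin m) (Fin n) ℝ) =
        (e.toPEquiv.toMatrix : Matrix (Fin m) (Fin n) ℝ) * B ↔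
      ∀ i k, B (e i) (e k) = A i k := by
  rw [PEquiv.mul_toMatrix_toPEquiv, PEquiv.toMatrix_toPEquiv_mul, ← Matrix.ext_iff]
  simp only [Matrix.submatrix_apply, id]
  exact ⟨fun h i k => by simpa using (h i (e k)).symm,
    fun h i l => by simpa using (h i (e.symm l)).symm⟩

lemma eq_toMatrix_of_support {m n : ℕ} {V : Matrix (Fin m) (Fin n) ℝ} {e : Fin m ≃ Fin n}
    (hrow : ∀ i, ∑ j, V i j = 1) (hsupp : ∀ i j, V i j ≠ 0 → j = e i) :
    V = e.toPEquiv.toMatrix := by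
  ext i j
  simp only [PEquiv.toMatrix_apply, Equiv.toPEquiv_apply, Option.mem_def, Option.some.injEq]
  split_ifs with hj
  · subst hj
    rw [← hrow i, Finset.sum_eq_single (e i) (fun j _ hj => ?_) (by simp)]
    by_contra h
    exact hj (hsupp i j h)
  · by_contra h
    exact hj (hsupp i j h).symm

def IsIso (X Y : DiGraph 𝕏) (e : Fin X.n ≃ Fin Y.n) : Prop :=
  (∀ i, Y.nodes (e i) = X.nodes i) ∧ ∀ i k, Y.A (e i) (e k) = X.A i k

lemma IsIso.symm {X Y : DiGraph 𝕏} {e : Fin X.n ≃ Fin Y.n} (he : IsIso X Y e) :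
    IsIso Y X e.symm :=
  ⟨fun j => by simpa using (he.1 (e.symm j)).symm,
    fun j l => by simpa using (he.2 (e.symm j) (e.symm l)).symm⟩

lemma exists_equiv_of_nodeSet_eq {X Y : DiGraph 𝕏} (h : nodeSet X = nodeSet Y) :
    ∃ e : Fin X.n ≃ Fin Y.n, ∀ i, Y.nodes (e i) = X.nodes i := by
  refine ⟨(Equiv.ofInjective _ X.nodes_inj).trans <|
    (Equiv.setCongr (show Set.range X.nodes = Set.range Y.nodes from h)).trans
    (Equiv.ofInjective _ Y.nodes_inj).symm, fun i => ?_⟩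
  simp [Equiv.apply_ofInjective_symm]

lemma apply_eq_of_dEdgeSet_subset {X Y : DiGraph 𝕏} {e : Fin X.n ≃ Fin Y.n}
    (he : ∀ i, Y.nodes (e i) = X.nodes i) (h : dEdgeSet X ⊆ dEdgeSet Y) {i k : Fin X.n}
    (hik : X.A i k ≠ 0) : Y.A (e i) (e k) = X.A i k := by
  obtain ⟨j, l, -, hjl⟩ := h ⟨i, k, hik, rfl⟩
  simp only [Prod.mk.injEq, ← he] at hjl
  obtain ⟨hj, hl, hA⟩ := hjl
  rw [Y.nodes_inj hj, Y.nodes_inj hl, hA]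

lemma diGraphEq_iff_exists_isIso {X Y : DiGraph 𝕏} : DiGraphEq X Y ↔ ∃ e, IsIso X Y e := by
  constructor
  · rintro ⟨hnodes, hedges⟩
    obtain ⟨e, he⟩ := exists_equiv_of_nodeSet_eq hnodes
    have he' j : X.nodes (e.symm j) = Y.nodes j := by simpa using (he (e.symm j)).symm
    refine ⟨e, he, fun i k => ?_⟩
    by_cases hik : X.A i k = 0
    · rw [hik]
      by_contra hY
      exact hY (by simpa [hik] using (apply_eq_of_dEdgeSet_subset he' hedges.symm.le hY).symm)
    · exact apply_eq_of_dEdgeSet_subset he hedges.le hik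
  · rintro ⟨e, he, hA⟩
    refine ⟨?_, ?_⟩
    · simp only [nodeSet, ← EquivLike.range_comp Y.nodes e, Function.comp_def, he]
    · ext t
      simp only [dEdgeSet, Set.mem_ofPred_eq, ← he, ← hA]
      exact ⟨fun ⟨i, k, h⟩ => ⟨e i, e k, h⟩,
        fun ⟨j, l, h⟩ => ⟨e.symm j, e.symm l, by simpa using h⟩⟩

lemma objD_eq_zero_iff (hc : 0 ≤ c) (hε : 0 < ε) {X Y : DiGraph 𝕏}
    {W : Matrix (Fin (X.n+1)) (Fin (Y.n+1)) ℝ} (hW : W ∈ WbarSet X.n Y.n) :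
    objD p c ε X Y W = 0 ↔
      (∀ i j, W i j * Dmat p c X Y i j = 0) ∧ mismatch X.A Y.A (topLeft W) = 0 := by
  have hterm i j : 0 ≤ W i j * Dmat p c X Y i j := mul_nonneg (hW.1 i j) (Dmat_nonneg hc X Y i j)
  rw [objD_eq, add_eq_zero_iff_of_nonneg
      (Fintype.sum_nonneg fun i => Fintype.sum_nonneg (hterm i))
      (mul_nonneg (by positivity) (mismatch_nonneg ..)), mul_eq_zero,
    or_iff_right (by positivity)]
  simp [Finset.sum_eq_zero_iff_of_nonneg, Finset.sum_nonneg, hterm]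

lemma IsIso.objD_permW_eq_zero (hp : p ≠ 0) {X Y : DiGraph 𝕏} {e : Fin X.n ≃ Fin Y.n}
    (he : IsIso X Y e) : objD p c ε X Y (permW e) = 0 := by
  have hcost i j : permW e i j * Dmat p c X Y i j = 0 := by
    induction i using Fin.lastCases <;> induction j using Fin.lastCases <;>
      simp only [permW_castSucc_castSucc, Dmat_castSucc_castSucc, permW_castSucc_last,
        permW_last, zero_mul, ite_mul, one_mul, ite_eq_right_iff]
    rintro rfl
    simp [he.1, Real.zero_rpow hp]
  have hmis : mismatch X.A Y.A (topLeft (permW e)) = 0 := by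
    rw [mismatch, topLeft_permW, (mul_toMatrix_eq_toMatrix_mul_iff _ _ e).2 he.2,
      ← PEquiv.toMatrix_symm, ← Equiv.toPEquiv_symm,
      (mul_toMatrix_eq_toMatrix_mul_iff _ _ e.symm).2 he.symm.2]
    simp [onorm]
  simp [objD_eq, hcost, hmis]

lemma exists_isIso_of_objD_eq_zero (hp : p ≠ 0) (hc : 0 < c) (hε : 0 < ε) {X Y : DiGraph 𝕏}
    {W : Matrix (Fin (X.n+1)) (Fin (Y.n+1)) ℝ} (hW : W ∈ WbarSet X.n Y.n)
    (h0 : objD p c ε X Y W = 0) : ∃ e, IsIso X Y e := by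
  obtain ⟨hcost, hmis⟩ := (objD_eq_zero_iff hc.le hε hW).1 h0
  have hdummy : c ^ p / 2 ≠ 0 := by positivity
  have hrow i : ∑ j, topLeft W i j = 1 := by
    have := hcost i.castSucc (Fin.last Y.n)
    simp only [Dmat_castSucc_last, mul_eq_zero, hdummy, or_false] at this
    simpa [topLeft, Fin.sum_univ_castSucc, this] using hW.2.2.1 i
  have hcol j : ∑ i, topLeft W i j = 1 := by
    have := hcost (Fin.last X.n) j.castSucc
    simp only [Dmat_last_castSucc, mul_eq_zero, hdummy, or_false] at this
    simpa [topLeft, Fin.sum_univ_castSucc, this] using hW.2.1 j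
  have hsupp i j (h : topLeft W i j ≠ 0) : Y.nodes j = X.nodes i := by
    have := hcost i.castSucc j.castSucc
    rw [Dmat_castSucc_castSucc, mul_eq_zero, or_iff_right (show W _ _ ≠ 0 from h),
      Real.rpow_eq_zero dist_nonneg hp, dist_eq_zero] at this
    exact this.symm
  have hnodes : nodeSet X = nodeSet Y := by
    refine subset_antisymm ?_ ?_ <;> rintro _ ⟨i, rfl⟩
    · obtain ⟨j, -, hj⟩ := Finset.exists_ne_zero_of_sum_ne_zero ((hrow i).symm ▸ one_ne_zero)
      exact ⟨j, hsupp i j hj⟩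
    · obtain ⟨j, -, hj⟩ := Finset.exists_ne_zero_of_sum_ne_zero ((hcol i).symm ▸ one_ne_zero)
      exact ⟨j, (hsupp j i hj).symm⟩
  obtain ⟨e, he⟩ := exists_equiv_of_nodeSet_eq hnodes
  have hV : topLeft W = e.toPEquiv.toMatrix :=
    eq_toMatrix_of_support hrow fun i j h => Y.nodes_inj ((hsupp i j h).trans (he i).symm)
  refine ⟨e, he, (mul_toMatrix_eq_toMatrix_mul_iff _ _ e).1 ?_⟩
  rw [← hV, ← sub_eq_zero, ← onorm_eq_zero]
  rw [mismatch] at hmis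
  linarith [onorm_nonneg (X.A * topLeft W - topLeft W * Y.A),
    onorm_nonneg (Y.A * (topLeft W)ᵀ - (topLeft W)ᵀ * X.A)]

end Identity

lemma sInf_setOf_eq_of_isMinOn {α : Type*} {f : α → ℝ} {s : Set α} {a : α} (ha : a ∈ s)
    (hmin : IsMinOn f s a) : sInf {v | ∃ x ∈ s, v = f x} = f a :=
  IsLeast.csInf_eq ⟨⟨a, ha, rfl⟩, by rintro _ ⟨x, hx, rfl⟩; exact hmin hx⟩

structure IsAssignmentFamily (S : ∀ m n : ℕ, Set (Matrix (Fin (m+1)) (Fin (n+1)) ℝ)) :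
    Prop where
  subset_WbarSet : ∀ m n, S m n ⊆ WbarSet m n
  isCompact : ∀ m n, IsCompact (S m n)
  nonempty : ∀ m n, (S m n).Nonempty
  permW_mem : ∀ {m n} (e : Fin m ≃ Fin n), permW e ∈ S m n
  transpose_mem : ∀ {m n W}, W ∈ S m n → Wᵀ ∈ S n m
  compW_mem : ∀ {a b g W1 W2}, W1 ∈ S a b → W2 ∈ S b g → compW W1 W2 ∈ S a g

lemma isAssignmentFamily_Wset : IsAssignmentFamily Wset where
  subset_WbarSet _ _ := Wset_subset_WbarSet
  isCompact _ _ := isCompact_Wset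
  nonempty _ _ := ⟨_, allDummy_mem_Wset⟩
  permW_mem := permW_mem_Wset
  transpose_mem := transpose_mem_Wset
  compW_mem := compW_mem_Wset

lemma isAssignmentFamily_WbarSet : IsAssignmentFamily WbarSet where
  subset_WbarSet _ _ := subset_rfl
  isCompact _ _ := isCompact_WbarSet
  nonempty _ _ := ⟨_, Wset_subset_WbarSet allDummy_mem_Wset⟩
  permW_mem e := Wset_subset_WbarSet (permW_mem_Wset e)
  transpose_mem := transpose_mem_WbarSet
  compW_mem := compW_mem_WbarSet

/-- `gospaD` is `assignDist Wset` and `gospaDLP` is `assignDist WbarSet`, definitionally. -/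
noncomputable def assignDist (S : ∀ m n : ℕ, Set (Matrix (Fin (m+1)) (Fin (n+1)) ℝ))
    (p c ε : ℝ) (X Y : DiGraph 𝕏) : ℝ :=
  sInf {v | ∃ W ∈ S X.n Y.n, v = objD p c ε X Y W} ^ (1 / p)

namespace IsAssignmentFamily

variable {p c ε : ℝ} {S : ∀ m n : ℕ, Set (Matrix (Fin (m+1)) (Fin (n+1)) ℝ)}

lemma exists_isMinOn (hS : IsAssignmentFamily S) (p c ε : ℝ) (X Y : DiGraph 𝕏) :
    ∃ W ∈ S X.n Y.n, IsMinOn (objD p c ε X Y) (S X.n Y.n) W :=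
  (hS.isCompact _ _).exists_isMinOn (hS.nonempty _ _) (continuous_objD X Y).continuousOn

lemma assignDist_comm (hS : IsAssignmentFamily S) (X Y : DiGraph 𝕏) :
    assignDist S p c ε X Y = assignDist S p c ε Y X := by
  have h {X Y : DiGraph 𝕏} {v : ℝ} :
      (∃ W ∈ S X.n Y.n, v = objD p c ε X Y W) → ∃ W ∈ S Y.n X.n, v = objD p c ε Y X W :=
    fun ⟨W, hW, hv⟩ => ⟨Wᵀ, hS.transpose_mem hW, hv.trans (objD_transpose X Y W).symm⟩
  unfold assignDist
  congr 2
  exact Set.ext fun v => ⟨h, h⟩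

lemma assignDist_eq_zero_iff (hS : IsAssignmentFamily S) (hp : p ≠ 0) (hc : 0 < c)
    (hε : 0 < ε) (X Y : DiGraph 𝕏) : assignDist S p c ε X Y = 0 ↔ DiGraphEq X Y := by
  obtain ⟨W, hW, hmin⟩ := hS.exists_isMinOn p c ε X Y
  have hW0 := objD_nonneg (p := p) hc.le hε.le (hS.subset_WbarSet _ _ hW)
  rw [assignDist, sInf_setOf_eq_of_isMinOn hW hmin, Real.rpow_eq_zero hW0 (by simpa),
    diGraphEq_iff_exists_isIso]
  refine ⟨exists_isIso_of_objD_eq_zero hp hc hε (hS.subset_WbarSet _ _ hW), ?_⟩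
  rintro ⟨e, he⟩
  exact le_antisymm ((hmin (hS.permW_mem e)).trans_eq (he.objD_permW_eq_zero hp)) hW0

lemma assignDist_triangle (hS : IsAssignmentFamily S) (hp : 1 ≤ p) (hc : 0 ≤ c) (hε : 0 ≤ ε)
    (X Y Z : DiGraph 𝕏) :
    assignDist S p c ε X Y ≤ assignDist S p c ε X Z + assignDist S p c ε Z Y := by
  obtain ⟨W, hW, hmin⟩ := hS.exists_isMinOn p c ε X Y
  obtain ⟨W1, hW1, hmin1⟩ := hS.exists_isMinOn p c ε X Z
  obtain ⟨W2, hW2, hmin2⟩ := hS.exists_isMinOn p c ε Z Y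
  simp only [assignDist, sInf_setOf_eq_of_isMinOn hW hmin, sInf_setOf_eq_of_isMinOn hW1 hmin1,
    sInf_setOf_eq_of_isMinOn hW2 hmin2]
  calc objD p c ε X Y W ^ (1 / p) ≤ objD p c ε X Y (compW W1 W2) ^ (1 / p) :=
        Real.rpow_le_rpow (objD_nonneg hc hε (hS.subset_WbarSet _ _ hW))
          (hmin (hS.compW_mem hW1 hW2)) (by positivity)
    _ ≤ _ := objD_compW_rpow_le hp hc hε (hS.subset_WbarSet _ _ hW1)
          (hS.subset_WbarSet _ _ hW2)

end IsAssignmentFamily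

/-- For `1 ≤ p < ∞`, `c > 0`, `ε > 0` and base metric `d`, the
directed graph GOSPA distance is a metric on the space of directed graphs with node
attributes (identity, symmetry and triangle inequality hold); the same holds for its
LP relaxation obtained by minimizing over `𝒲̄_{X,Y}` instead of `𝒲_{X,Y}`. -/
theorem directed_graph_gospa_is_metric (p c ε : ℝ) (hp : 1 ≤ p) (hc : 0 < c)
    (hε : 0 < ε) :
    ((∀ X Y : DiGraph 𝕏, gospaD p c ε X Y = 0 ↔ DiGraphEq X Y) ∧
     (∀ X Y : DiGraph 𝕏, gospaD p c ε X Y = gospaD p c ε Y X) ∧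
     (∀ X Y Z : DiGraph 𝕏,
        gospaD p c ε X Y ≤ gospaD p c ε X Z + gospaD p c ε Z Y)) ∧
    ((∀ X Y : DiGraph 𝕏, gospaDLP p c ε X Y = 0 ↔ DiGraphEq X Y) ∧
     (∀ X Y : DiGraph 𝕏, gospaDLP p c ε X Y = gospaDLP p c ε Y X) ∧
     (∀ X Y Z : DiGraph 𝕏,
        gospaDLP p c ε X Y ≤ gospaDLP p c ε X Z + gospaDLP p c ε Z Y)) := by
  have hp0 : p ≠ 0 := by positivity
  exact ⟨⟨isAssignmentFamily_Wset.assignDist_eq_zero_iff hp0 hc hε,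
      isAssignmentFamily_Wset.assignDist_comm,
      isAssignmentFamily_Wset.assignDist_triangle hp hc.le hε.le⟩,
    ⟨isAssignmentFamily_WbarSet.assignDist_eq_zero_iff hp0 hc hε,
      isAssignmentFamily_WbarSet.assignDist_comm,
      isAssignmentFamily_WbarSet.assignDist_triangle hp hc.le hε.le⟩⟩

end GraphGOSPA
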